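/- Consider a client i with L-smooth objective f_i and L-Lipschitz stochastic gradient maps, and two coupled local-momentum sequences built with the SAME batches from starting points w_k and w_{k−1}. Then for every τ ∈ {0,…,E−1}: (i) ‖v_{k,τ}^{(i)} − v̂_{k−1,τ}^{(i)}‖ ≤ 2L·Σ_{t=0}^{τ} ‖w_{k,t}^{(i)} − ŵ_{k−1,t}^{(i)}‖; and consequently (ii) ‖v_{k,τ}^{(i)} − v̂_{k−1,τ}^{(i)}‖ ≤ 2L(τ+1)(1 + 2ηLE)^τ·‖w_k − w_{k−1}‖. -/

import Mathlib

/-!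
Write `D t = ‖w t - ŵ t‖` and `Δ t = ‖v t - v̂ t‖`. Because both recursions use the same batch
at each step, subtracting them and applying the Lipschitz bounds gives `Δ 0 ≤ L D 0` and
`Δ (t+1) ≤ L D (t+1) + Δ t + L D t`; unrolling yields (i). The iterates then satisfy
`D (t+1) ≤ D t + η Δ t ≤ D t + 2ηL Σ_{s≤t} D s`, and since the running sum has at most `E`
terms, each bounded by `(1 + 2ηLE)^t D 0`, a discrete Grönwall induction gives
`D t ≤ (1 + 2ηLE)^t D 0`. Substituting this into (i) gives (ii).
-/

open Finset

section SequenceBounds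

variable {D Δ : ℕ → ℝ}

theorem le_two_mul_sum_of_le_add_add {L : ℝ} {N : ℕ} (hL : 0 ≤ L) (hD : ∀ t, 0 ≤ D t)
    (h0 : Δ 0 ≤ L * D 0)
    (hstep : ∀ t, t + 1 ≤ N → Δ (t + 1) ≤ L * D (t + 1) + Δ t + L * D t) :
    ∀ τ ≤ N, Δ τ ≤ 2 * L * ∑ t ∈ range (τ + 1), D t := by
  -- the target bound is not itself inductive; this sharper one is
  have hsharp : ∀ τ ≤ N, Δ τ ≤ L * D τ + 2 * L * ∑ t ∈ range τ, D t := by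
    intro τ
    induction τ with
    | zero => simpa using h0
    | succ τ ih =>
      intro hτ
      have := hstep τ hτ
      have := ih (by omega)
      rw [sum_range_succ]
      linarith
  intro τ hτ
  have := hsharp τ hτ
  have := mul_nonneg hL (hD τ)
  rw [sum_range_succ]
  linarith

theorem sum_range_succ_le_mul_pow_mul {c a : ℝ} {t : ℕ} (hc : 1 ≤ c) (ha : 0 ≤ a)
    (hD : ∀ s ≤ t, D s ≤ c ^ s * a) :
    ∑ s ∈ range (t + 1), D s ≤ (t + 1) * (c ^ t * a) := by
  calc ∑ s ∈ range (t + 1), D s ≤ ∑ _s ∈ range (t + 1), c ^ t * a := by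
        refine sum_le_sum fun s hs => ?_
        have hs : s ≤ t := Nat.lt_succ_iff.mp (mem_range.mp hs)
        exact (hD s hs).trans (mul_le_mul_of_nonneg_right (pow_le_pow_right₀ hc hs) ha)
    _ = (t + 1) * (c ^ t * a) := by simp

theorem le_pow_mul_of_le_add_mul_sum {K c : ℝ} {N : ℕ} (hK : 0 ≤ K) (hc : 1 + K * N ≤ c)
    (hD0 : 0 ≤ D 0) (hstep : ∀ t, t + 1 ≤ N → D (t + 1) ≤ D t + K * ∑ s ∈ range (t + 1), D s) :
    ∀ t ≤ N, D t ≤ c ^ t * D 0 := by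
  have hc1 : 1 ≤ c := by nlinarith [(Nat.cast_nonneg N : (0 : ℝ) ≤ N)]
  suffices h : ∀ t ≤ N, ∀ s ≤ t, D s ≤ c ^ s * D 0 from fun t ht => h t ht t le_rfl
  intro t
  induction t with
  | zero => intro _ s hs; simp [Nat.le_zero.mp hs]
  | succ t ih =>
    intro ht s hs
    rcases Nat.lt_or_eq_of_le hs with hs | rfl
    · exact ih (by omega) s (by omega)
    have hprev := ih (by omega)
    have hsum := sum_range_succ_le_mul_pow_mul hc1 hD0 hprev
    have hN : (t : ℝ) + 1 ≤ N := by exact_mod_cast ht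
    have hpow : 0 ≤ c ^ t * D 0 := by positivity
    calc D (t + 1) ≤ c ^ t * D 0 + K * ((t + 1) * (c ^ t * D 0)) :=
          (hstep t ht).trans (add_le_add (hprev t le_rfl) (mul_le_mul_of_nonneg_left hsum hK))
      _ ≤ c ^ t * D 0 * (1 + K * N) := by nlinarith [mul_nonneg hK hpow]
      _ ≤ c ^ (t + 1) * D 0 := by rw [pow_succ]; nlinarith

end SequenceBounds

theorem norm_sub_smul_sub_sub_smul_le {E : Type*} [SeminormedAddCommGroup E] [NormedSpace ℝ E]
    {η : ℝ} (hη : 0 ≤ η) (x y u v : E) :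
    ‖(x - η • u) - (y - η • v)‖ ≤ ‖x - y‖ + η * ‖u - v‖ := by
  calc ‖(x - η • u) - (y - η • v)‖ = ‖(x - y) - η • (u - v)‖ := by
        rw [smul_sub]; abel_nf
    _ ≤ ‖x - y‖ + η * ‖u - v‖ :=
        (norm_sub_le _ _).trans_eq (by rw [norm_smul, Real.norm_of_nonneg hη])

theorem norm_momentum_sub_le {E : Type*} [SeminormedAddCommGroup E] {L : ℝ} {G : E → E}
    (hG : ∀ x y, ‖G x - G y‖ ≤ L * ‖x - y‖) (x' x y' y u v : E) :
    ‖(G x' + u - G x) - (G y' + v - G y)‖ ≤ L * ‖x' - y'‖ + ‖u - v‖ + L * ‖x - y‖ := by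
  calc ‖(G x' + u - G x) - (G y' + v - G y)‖
        = ‖(G x' - G y') + (u - v) - (G x - G y)‖ := by abel_nf
    _ ≤ ‖G x' - G y'‖ + ‖u - v‖ + ‖G x - G y‖ :=
        (norm_sub_le _ _).trans (add_le_add_left (norm_add_le _ _) _)
    _ ≤ L * ‖x' - y'‖ + ‖u - v‖ + L * ‖x - y‖ := by gcongr <;> apply hG

theorem stmt13_general
    {d : ℕ} (L η : ℝ) (hL : 0 < L) (hη : 0 < η) (E : ℕ)
    (f : EuclideanSpace ℝ (Fin d) → ℝ)
    (hsmooth : ∀ x y, ‖gradient f x - gradient f y‖ ≤ L * ‖x - y‖)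
    (G : ℕ → EuclideanSpace ℝ (Fin d) → EuclideanSpace ℝ (Fin d))
    (hGlip : ∀ τ x y, ‖G τ x - G τ y‖ ≤ L * ‖x - y‖)
    (wk wk1 : EuclideanSpace ℝ (Fin d))
    (w wh v vh : ℕ → EuclideanSpace ℝ (Fin d))
    (hw0 : w 0 = wk) (hwh0 : wh 0 = wk1)
    (hv0 : v 0 = gradient f wk) (hvh0 : vh 0 = gradient f wk1)
    (hv : ∀ τ, 1 ≤ τ → τ ≤ E - 1 → v τ = G τ (w τ) + v (τ - 1) - G τ (w (τ - 1)))
    (hvh : ∀ τ, 1 ≤ τ → τ ≤ E - 1 → vh τ = G τ (wh τ) + vh (τ - 1) - G τ (wh (τ - 1)))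
    (hw : ∀ τ, τ ≤ E - 1 → w (τ + 1) = w τ - η • v τ)
    (hwh : ∀ τ, τ ≤ E - 1 → wh (τ + 1) = wh τ - η • vh τ) :
    ∀ τ, τ ≤ E - 1 →
      ‖v τ - vh τ‖ ≤ 2 * L * ∑ t ∈ Finset.range (τ + 1), ‖w t - wh t‖ ∧
      ‖v τ - vh τ‖ ≤ 2 * L * ((τ : ℝ) + 1) * (1 + 2 * η * L * E) ^ τ * ‖wk - wk1‖ := by
  set D : ℕ → ℝ := fun t => ‖w t - wh t‖
  have hD0 : D 0 = ‖wk - wk1‖ := by simp only [D, hw0, hwh0]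
  have hv_sum : ∀ τ ≤ E - 1, ‖v τ - vh τ‖ ≤ 2 * L * ∑ t ∈ range (τ + 1), D t := by
    refine le_two_mul_sum_of_le_add_add hL.le (fun t => norm_nonneg _) ?_ fun t ht => ?_
    · simpa only [D, hv0, hvh0, hD0] using hsmooth wk wk1
    · simpa only [hv (t + 1) (by omega) ht, hvh (t + 1) (by omega) ht, Nat.add_sub_cancel]
        using norm_momentum_sub_le (hGlip (t + 1)) _ _ _ _ _ _
  have hw_growth : ∀ t ≤ E - 1, D t ≤ (1 + 2 * η * L * E) ^ t * D 0 := by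
    refine le_pow_mul_of_le_add_mul_sum (K := 2 * η * L) (by positivity) ?_ (norm_nonneg _) fun t ht => ?_
    · gcongr
      exact_mod_cast Nat.sub_le E 1
    · calc D (t + 1) ≤ D t + η * ‖v t - vh t‖ := by
            simpa only [D, hw t (by omega), hwh t (by omega)]
              using norm_sub_smul_sub_sub_smul_le hη.le _ _ _ _
        _ ≤ D t + 2 * η * L * ∑ s ∈ range (t + 1), D s := by
            nlinarith [hv_sum t (by omega)]
  intro τ hτ
  refine ⟨hv_sum τ hτ, (hv_sum τ hτ).trans ?_⟩
  calc 2 * L * ∑ t ∈ range (τ + 1), D t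
      ≤ 2 * L * ((τ + 1) * ((1 + 2 * η * L * E) ^ τ * D 0)) := by
        gcongr
        exact sum_range_succ_le_mul_pow_mul (by nlinarith [mul_pos hη hL]) (norm_nonneg _)
          fun s hs => hw_growth s (hs.trans hτ)
    _ = 2 * L * ((τ : ℝ) + 1) * (1 + 2 * η * L * E) ^ τ * ‖wk - wk1‖ := by rw [hD0]; ring

/-- claims (eq. 53) and (eq. 58) inside Lemma "nov-1-lem3".
Client `i` has an `L`-smooth objective `f` and `L`-Lipschitz stochastic-gradient maps
`G τ = ∇̃f_i(·; B_{k,τ}^{(i)})` (the batches are fixed, so this is deterministic).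
Two coupled local-momentum sequences are run from the starting points `wk = w_k` and
`wk1 = w_{k−1}`, using the SAME batch at each local step.  Then for every
`τ ∈ {0,…,E−1}`:
(i)  `‖v_{k,τ} − v̂_{k−1,τ}‖ ≤ 2L·Σ_{t=0}^{τ} ‖w_{k,t} − ŵ_{k−1,t}‖`, and consequently
(ii) `‖v_{k,τ} − v̂_{k−1,τ}‖ ≤ 2L(τ+1)(1 + 2ηLE)^τ · ‖w_k − w_{k−1}‖`. -/
theorem stmt13
    {d : ℕ} (L η : ℝ) (hL : 0 < L) (hη : 0 < η) (E : ℕ) (hE : 1 ≤ E)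
    (f : EuclideanSpace ℝ (Fin d) → ℝ)
    (hdiff : Differentiable ℝ f)
    (hsmooth : ∀ x y, ‖gradient f x - gradient f y‖ ≤ L * ‖x - y‖)
    (G : ℕ → EuclideanSpace ℝ (Fin d) → EuclideanSpace ℝ (Fin d))
    (hGlip : ∀ τ x y, ‖G τ x - G τ y‖ ≤ L * ‖x - y‖)
    (wk wk1 : EuclideanSpace ℝ (Fin d))
    (w wh v vh : ℕ → EuclideanSpace ℝ (Fin d))
    (hw0 : w 0 = wk) (hwh0 : wh 0 = wk1)
    (hv0 : v 0 = gradient f wk) (hvh0 : vh 0 = gradient f wk1)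
    (hv : ∀ τ, 1 ≤ τ → τ ≤ E - 1 → v τ = G τ (w τ) + v (τ - 1) - G τ (w (τ - 1)))
    (hvh : ∀ τ, 1 ≤ τ → τ ≤ E - 1 → vh τ = G τ (wh τ) + vh (τ - 1) - G τ (wh (τ - 1)))
    (hw : ∀ τ, τ ≤ E - 1 → w (τ + 1) = w τ - η • v τ)
    (hwh : ∀ τ, τ ≤ E - 1 → wh (τ + 1) = wh τ - η • vh τ) :
    ∀ τ, τ ≤ E - 1 →
      ‖v τ - vh τ‖ ≤ 2 * L * ∑ t ∈ Finset.range (τ + 1), ‖w t - wh t‖ ∧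
      ‖v τ - vh τ‖ ≤ 2 * L * ((τ : ℝ) + 1) * (1 + 2 * η * L * E) ^ τ * ‖wk - wk1‖ :=
  stmt13_general L η hL hη E f hsmooth G hGlip wk wk1 w wh v vh hw0 hwh0 hv0 hvh0 hv hvh hw hwh
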